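/- Let S* be an optimal solution of LogSpecT, i.e., a minimizer of f(S) = ‖S‖_{1,1} − α·Σ_i log((S·1)_i) over the set {S : S = Sᵀ, diag(S)=0, S ≥ 0, S·C∞ = C∞·S}, where α > 0. Then ‖S*‖_{1,1} = α·m. -/

import Mathlib

/-- Feasibility for LogSpecT: valid adjacency matrix commuting with C∞. -/
def feas {m : ℕ} (C S : Matrix (Fin m) (Fin m) ℝ) : Prop :=
  S.IsSymm ∧ (∀ i, S i i = 0) ∧ (∀ i j, 0 ≤ S i j) ∧ S * C = C * S

/-- LogSpecT objective ‖S‖_{1,1} − α·1ᵀ log(S1). -/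
noncomputable def obj {m : ℕ} (α : ℝ) (S : Matrix (Fin m) (Fin m) ℝ) : ℝ :=
  (∑ i, ∑ j, |S i j|) - α * ∑ i, Real.log (∑ j, S i j)

/-! Along the ray `t ↦ t • S*` of feasible points the objective equals
`obj α S* + (t - 1) ‖S*‖_{1,1} - α m log t`, since the `m` row sums all scale by `t`.
As this is minimal at `t = 1`, its derivative `‖S*‖_{1,1} - α m` vanishes there. -/

lemma feas.smul {m : ℕ} {C S : Matrix (Fin m) (Fin m) ℝ} (hS : feas C S) {t : ℝ}
    (ht : 0 ≤ t) : feas C (t • S) := by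
  obtain ⟨hsymm, hdiag, hnonneg, hcomm⟩ := hS
  refine ⟨?_, fun i => by simp [hdiag i], fun i j => mul_nonneg ht (hnonneg i j), ?_⟩
  · rw [Matrix.IsSymm, Matrix.transpose_smul, hsymm]
  · rw [Matrix.smul_mul, Matrix.mul_smul, hcomm]

lemma Matrix.sum_smul_apply {ι κ R : Type*} [Fintype κ] [NonUnitalNonAssocSemiring R]
    (S : Matrix ι κ R) (t : R) (i : ι) : ∑ j, (t • S) i j = t * ∑ j, S i j := by
  simp [Finset.mul_sum]

lemma obj_smul {m : ℕ} (α : ℝ) {S : Matrix (Fin m) (Fin m) ℝ} (hS : ∀ i, ∑ j, S i j ≠ 0)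
    {t : ℝ} (ht : 0 < t) :
    obj α (t • S) = obj α S + (t - 1) * (∑ i, ∑ j, |S i j|) - α * m * Real.log t := by
  have habs : ∑ i, ∑ j, |(t • S) i j| = t * ∑ i, ∑ j, |S i j| := by
    simp [abs_mul, abs_of_pos ht, Finset.mul_sum]
  have hlog : ∑ i, Real.log (∑ j, (t • S) i j) = m * Real.log t + ∑ i, Real.log (∑ j, S i j) := by
    simp_rw [Matrix.sum_smul_apply, Real.log_mul ht.ne' (hS _), Finset.sum_add_distrib]
    simp
  rw [obj, obj, habs, hlog]
  ring

lemma eq_of_forall_log_le_sub_one_mul {N c : ℝ}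
    (h : ∀ t, 0 < t → c * Real.log t ≤ (t - 1) * N) : N = c := by
  have hmin : IsLocalMin (fun t => (t - 1) * N - c * Real.log t) 1 := by
    filter_upwards [lt_mem_nhds one_pos] with t ht
    simpa using h t ht
  have hderiv : HasDerivAt (fun t => (t - 1) * N - c * Real.log t) (1 * N - c * 1⁻¹) 1 :=
    (((hasDerivAt_id' 1).sub_const 1).mul_const N).sub
      ((Real.hasDerivAt_log one_ne_zero).const_mul c)
  simpa [sub_eq_zero] using hmin.hasDerivAt_eq_zero hderiv

theorem stmt_13_general (m : ℕ) (α : ℝ) (Cinf : Matrix (Fin m) (Fin m) ℝ)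
    (Sstar : Matrix (Fin m) (Fin m) ℝ)
    (hfeas : feas Cinf Sstar) (hpos : ∀ i, 0 < ∑ j, Sstar i j)
    (hopt : ∀ T, feas Cinf T → (∀ i, 0 < ∑ j, T i j) → obj α Sstar ≤ obj α T) :
    (∑ i, ∑ j, |Sstar i j|) = α * m := by
  refine eq_of_forall_log_le_sub_one_mul fun t ht => ?_
  have hposT : ∀ i, 0 < ∑ j, (t • Sstar) i j := fun i => by
    rw [Matrix.sum_smul_apply]
    exact mul_pos ht (hpos i)
  have h := hopt (t • Sstar) (hfeas.smul ht.le) hposT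
  rw [obj_smul α (fun i => (hpos i).ne') ht] at h
  linarith

/-- Any optimal solution S* of LogSpecT satisfies ‖S*‖_{1,1} = α·m. -/
theorem stmt_13 (m : ℕ) (α : ℝ) (hα : 0 < α) (Cinf : Matrix (Fin m) (Fin m) ℝ)
    (hCinf : Cinf.IsSymm) (Sstar : Matrix (Fin m) (Fin m) ℝ)
    (hfeas : feas Cinf Sstar) (hpos : ∀ i, 0 < ∑ j, Sstar i j)
    (hopt : ∀ T, feas Cinf T → (∀ i, 0 < ∑ j, T i j) → obj α Sstar ≤ obj α T) :
    (∑ i, ∑ j, |Sstar i j|) = α * m :=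
  stmt_13_general m α Cinf Sstar hfeas hpos hopt
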